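/- Let R be a supervisor realization that is robust with respect to G, X_crit and A, and let L_R ⊆ L(𝒜) be defined inductively by: ε ∈ L_R; if s ∈ L_R and the state of 𝒜 reached by s is a player-2 state, then se ∈ L_R for every e ∈ Σ_{o,e} with se ∈ L(𝒜); if s ∈ L_R and the state reached by s is a player-1 state, then sγ ∈ L_R for γ = Σ_uc and for γ = C_R(η(s)), where η : E* → Σ_o* is the natural projection erasing all events of E not in Σ_o. Then L_R ⊆ L(𝒜^trim), i.e., no string of L_R reaches a state q of 𝒜 with I₁(q) ∩ X_crit ≠ ∅. -/

import Mathlib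

attribute [local instance] Classical.propDecidable

noncomputable section

namespace RobustDES

/-- Events of the attacked system `Σ_m = Σ ∪ Σ_a^i ∪ Σ_a^d`:
`plain a` is a legitimate event `a ∈ Σ`, `ins a` is the inserted copy `a_i`
and `del a` is the deleted copy `a_d`. -/
inductive Ev (S : Type) : Type
  | plain : S → Ev S
  | ins : S → Ev S
  | del : S → Ev S

/-- Extension of a partial transition function to strings. -/
def run {X E : Type} (δ : X → E → Option X) : X → List E → Option X
  | x, [] => some x
  | x, e :: s => (δ x e).bind fun y => run δ y s

/-- The language generated by a partial automaton `(X, δ, x0)`. -/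
def Lang {X E : Type} (δ : X → E → Option X) (x0 : X) : Set (List E) :=
  { s | (run δ x0 s).isSome }

variable {S XG XR XA : Type}

/-- The projection `P^G : Σ_m* → Σ*` (`a, a_d ↦ a`, `a_i ↦ ε`). -/
def PGproj : List (Ev S) → List S := fun s =>
  s.flatMap fun e =>
    match e with
    | .plain a => [a]
    | .del a => [a]
    | .ins _ => []

/-- The projection `P^S : Σ_m* → Σ*` (`a, a_i ↦ a`, `a_d ↦ ε`). -/
def PSproj : List (Ev S) → List S := fun s =>
  s.flatMap fun e =>
    match e with
    | .plain a => [a]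
    | .ins a => [a]
    | .del _ => []

/-- Natural projection `P_{ΣΣo}` erasing events not in `So`. -/
def projOn (So : Set S) (s : List S) : List S :=
  s.filter fun e => decide (e ∈ So)

/-- Membership of a tagged event in `Σ_{o,e} = Σ_o ∪ Σ_a^i ∪ Σ_a^d`. -/
def inOe (So Sa : Set S) : Ev S → Prop
  | .plain a => a ∈ So
  | .ins a => a ∈ Sa
  | .del a => a ∈ Sa

/-- Natural projection `P_{Σ_mΣ_{o,e}}` erasing the unobservable events `Σ_uo`. -/
def projOe (So : Set S) : List (Ev S) → List (Ev S) := fun s =>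
  s.flatMap fun e =>
    match e with
    | .plain a => if a ∈ So then [Ev.plain a] else []
    | e => [e]

/-- Transition function of the attacked plant `G_a` (over `Σ_m`):
`δ_{G_a}(x,e) = δ_G(x, P^G(e))`. -/
def δGa (Sa : Set S) (δG : XG → S → Option XG) : XG → Ev S → Option XG
  | x, .plain a => δG x a
  | x, .del a => if a ∈ Sa then δG x a else none
  | x, .ins a => if a ∈ Sa then some x else none

/-- Active (legitimate) event set of a supervisor state. -/
def ΓR (δR : XR → S → Option XR) (y : XR) : Set S := {e | (δR y e).isSome}

/-- Transition function of the attacked supervisor `R_a` (over `Σ_m`). -/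
def δRa (Sa : Set S) (δR : XR → S → Option XR) : XR → Ev S → Option XR
  | y, .plain a => δR y a
  | y, .ins a =>
      if a ∈ Sa then (if (δR y a).isSome then δR y a else some y) else none
  | y, .del a =>
      if a ∈ Sa then (if (δR y a).isSome then some y else none) else none

/-- `R` is a supervisor realization: every uncontrollable event is enabled
everywhere and enabled unobservable events self-loop. -/
def IsSupRealization (So Suc : Set S) (δR : XR → S → Option XR) : Prop :=
  (∀ x e, e ∈ Suc → (δR x e).isSome) ∧
  (∀ x e, e ∉ So → (δR x e).isSome → δR x e = some x)

/-- `A` is an attack automaton over `Σ_{o,e}`: it is complete on `Σ_o \ Σ_a`,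
for every `e ∈ Σ_a` either `e` or `e_d` is defined, and it is undefined outside
`Σ_{o,e}`. -/
def IsAttack (So Sa : Set S) (δA : XA → Ev S → Option XA) : Prop :=
  (∀ q a, a ∈ So → a ∉ Sa → (δA q (.plain a)).isSome) ∧
  (∀ q a, a ∈ Sa → ((δA q (.plain a)).isSome ∨ (δA q (.del a)).isSome)) ∧
  (∀ q e, ¬ inOe So Sa e → δA q e = none)

/-- Transition function of the composition `G_a || R_a || A` over `Σ_m`:
all three components move on events of `Σ_{o,e}`, only `G_a` and `R_a` move on
unobservable events. -/
def δGRA (So Sa : Set S) (δG : XG → S → Option XG) (δR : XR → S → Option XR)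
    (δA : XA → Ev S → Option XA) :
    XG × XR × XA → Ev S → Option (XG × XR × XA) := fun p e =>
  match e with
  | .plain a =>
    if a ∈ So then
      match δGa Sa δG p.1 (.plain a), δRa Sa δR p.2.1 (.plain a), δA p.2.2 (.plain a) with
      | some x, some y, some z => some (x, y, z)
      | _, _, _ => none
    else
      match δGa Sa δG p.1 (.plain a), δRa Sa δR p.2.1 (.plain a) with
      | some x, some y => some (x, y, p.2.2)
      | _, _ => none
  | e =>
      match δGa Sa δG p.1 e, δRa Sa δR p.2.1 e, δA p.2.2 e with
      | some x, some y, some z => some (x, y, z)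
      | _, _, _ => none

/-- Transition function of the composition `G_a || R_a` over `Σ_m`. -/
def δGaRa (Sa : Set S) (δG : XG → S → Option XG) (δR : XR → S → Option XR) :
    XG × XR → Ev S → Option (XG × XR) := fun p e =>
  match δGa Sa δG p.1 e, δRa Sa δR p.2 e with
  | some x, some y => some (x, y)
  | _, _ => none

/-- `R` is robust w.r.t. `G`, `X_crit` and `A`:
`δ_G(x_{0,G}, s) ∉ X_crit` for every `s ∈ L(S_A/G) = P^G(L(G_a||R_a||A))`. -/
def Robust (So Sa : Set S) (Xcrit : Set XG)
    (δG : XG → S → Option XG) (x0G : XG)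
    (δR : XR → S → Option XR) (x0R : XR)
    (δA : XA → Ev S → Option XA) (x0A : XA) : Prop :=
  ∀ t ∈ Lang (δGRA So Sa δG δR δA) (x0G, x0R, x0A),
    ∀ x, run δG x0G (PGproj t) = some x → x ∉ Xcrit

/-- Total extension `Δ_R` of `δ_R` over observable strings. -/
def ΔRrun (δR : XR → S → Option XR) : XR → List S → XR
  | y, [] => y
  | y, e :: s => ΔRrun δR ((δR y e).getD y) s

/-- Control decision `C_R(s) = Γ_R(Δ_R(x_{0,R}, s))`. -/
def CR (δR : XR → S → Option XR) (x0R : XR) (s : List S) : Set S :=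
  {e | (δR (ΔRrun δR x0R s) e).isSome}

/-- The state estimate under attack
`RE(s) = {x : x = δ_{G_a}(x_{0,G}, t), t ∈ P⁻¹_{Σ_mΣ_{o,e}}(s) ∩ L(G_a||R_a||A)}`. -/
def RE (So Sa : Set S) (δG : XG → S → Option XG) (x0G : XG)
    (δR : XR → S → Option XR) (x0R : XR)
    (δA : XA → Ev S → Option XA) (x0A : XA) (s : List (Ev S)) : Set XG :=
  {x | ∃ t, projOe So t = s ∧ t ∈ Lang (δGRA So Sa δG δR δA) (x0G, x0R, x0A) ∧
        run (δGa Sa δG) x0G t = some x}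

/-! ### The arena -/

/-- Unobservable reach `UR_γ(Q)`. -/
def URch (So : Set S) (δG : XG → S → Option XG) (γ : Set S) (Q : Set XG) : Set XG :=
  {x | ∃ t : List S, (∀ a ∈ t, a ∉ So ∧ a ∈ γ) ∧ ∃ q ∈ Q, run δG q t = some x}

/-- Observable reach `NX_e(Q)`. -/
def NXr (δG : XG → S → Option XG) (a : S) (Q : Set XG) : Set XG :=
  {x | ∃ q ∈ Q, δG q a = some x}

/-- Active event set `Γ_G(Q)` of a set of plant states. -/
def ΓGset (δG : XG → S → Option XG) (Q : Set XG) : Set S :=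
  {a | ∃ x ∈ Q, (δG x a).isSome}

/-- Player-1 states of the arena. -/
abbrev AQ1 (XG XA : Type) := Set XG × XA

/-- Player-2 states of the arena. -/
abbrev AQ2 (S XG XA : Type) := Set XG × XA × Set S × Option S

/-- Player-1 transition `h₁((S₁,S₂),γ) = (UR_γ(S₁), S₂, γ, ε)`. -/
def h1 (So : Set S) (δG : XG → S → Option XG) (p : AQ1 XG XA) (γ : Set S) :
    AQ2 S XG XA :=
  (URch So δG γ p.1, p.2, γ, none)

/-- Player-2 transition `h₂`. -/
def h2 (So Sa : Set S) (δG : XG → S → Option XG) (δA : XA → Ev S → Option XA)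
    (q : AQ2 S XG XA) : Ev S → Option (AQ1 XG XA ⊕ AQ2 S XG XA)
  | .plain a =>
    if a ∈ So then
      if q.2.2.2 = some a then some (Sum.inl (q.1, q.2.1))
      else if q.2.2.2 = none ∧ a ∈ ΓGset δG q.1 ∧ a ∈ q.2.2.1 then
        (δA q.2.1 (.plain a)).map fun z => Sum.inl (NXr δG a q.1, z)
      else none
    else none
  | .ins a =>
    if a ∈ Sa ∧ q.2.2.2 = none then
      (δA q.2.1 (.ins a)).map fun z => Sum.inr (q.1, z, q.2.2.1, some a)
    else none
  | .del a =>
    if a ∈ Sa ∧ q.2.2.2 = none ∧ a ∈ ΓGset δG q.1 ∧ a ∈ q.2.2.1 then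
      (δA q.2.1 (.del a)).map fun z =>
        Sum.inr (URch So δG q.2.2.1 (NXr δG a q.1), z, q.2.2.1, none)
    else none

/-- One-step map `H₂ : Q₂ × Σ_{o,e} × Γ ⇀ Q₂` of Definition 6. -/
def H2 (So Sa : Set S) (δG : XG → S → Option XG) (δA : XA → Ev S → Option XA)
    (q : AQ2 S XG XA) : Ev S → Set S → Option (AQ2 S XG XA)
  | .plain a, γ =>
      (h2 So Sa δG δA q (.plain a)).bind fun r =>
        match r with
        | .inl p => some (h1 So δG p γ)
        | .inr _ => none
  | .del a, _ =>
      (h2 So Sa δG δA q (.del a)).bind fun r =>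
        match r with
        | .inr q' => some q'
        | .inl _ => none
  | .ins a, γ =>
      (h2 So Sa δG δA q (.ins a)).bind fun r =>
        match r with
        | .inr q' =>
            (h2 So Sa δG δA q' (.plain a)).bind fun r2 =>
              match r2 with
              | .inl p => some (h1 So δG p γ)
              | .inr _ => none
        | .inl _ => none

/-- Extension of `H₂` to strings with a sequence of control decisions. -/
def H2run (So Sa : Set S) (δG : XG → S → Option XG) (δA : XA → Ev S → Option XA) :
    AQ2 S XG XA → List (Ev S) → List (Set S) → Option (AQ2 S XG XA)
  | q, [], [] => some q
  | q, e :: s, γ :: γs =>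
      (H2 So Sa δG δA q e γ).bind fun q' => H2run So Sa δG δA q' s γs
  | _, _ :: _, [] => none
  | _, [], _ :: _ => none

/-- The sequence of control decisions `γ_i = C_R(P^S(s^i))`, `i = 1, …, |s|`. -/
def ctrlSeq (δR : XR → S → Option XR) (x0R : XR) (s : List (Ev S)) : List (Set S) :=
  (List.range s.length).map fun i => CR δR x0R (PSproj (s.take (i + 1)))

/-- Initial arena state `q₀ = ({x_{0,G}}, x_{0,A})`. -/
def arenaInit (x0G : XG) (x0A : XA) : AQ1 XG XA := ({x0G}, x0A)

/-- The arena `𝒜` regarded as a partial automaton over `E = Γ ∪ Σ_{o,e}`. -/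
def δAr (So Suc Sa : Set S) (δG : XG → S → Option XG) (δA : XA → Ev S → Option XA) :
    (AQ1 XG XA ⊕ AQ2 S XG XA) → (Set S ⊕ Ev S) → Option (AQ1 XG XA ⊕ AQ2 S XG XA)
  | .inl p, .inl γ => if Suc ⊆ γ then some (.inr (h1 So δG p γ)) else none
  | .inr q, .inr e => h2 So Sa δG δA q e
  | _, _ => none

/-- The projection `I₁` onto the plant state-estimate component. -/
def I1 : (AQ1 XG XA ⊕ AQ2 S XG XA) → Set XG := Sum.elim Prod.fst Prod.fst

/-- The projection `I₂` onto the attacker-state component. -/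
def I2 : (AQ1 XG XA ⊕ AQ2 S XG XA) → XA := Sum.elim (fun p => p.2) (fun q => q.2.1)

/-- The language `L(𝒜)` of the arena. -/
def LA (So Suc Sa : Set S) (δG : XG → S → Option XG) (δA : XA → Ev S → Option XA)
    (x0G : XG) (x0A : XA) : Set (List (Set S ⊕ Ev S)) :=
  Lang (δAr So Suc Sa δG δA) (Sum.inl (arenaInit x0G x0A))

/-- The language `L(𝒜^{trim})`: strings of `L(𝒜)` whose runs visit no state `q`
with `I₁(q) ∩ X_crit ≠ ∅`. -/
def LAtrim (So Suc Sa : Set S) (δG : XG → S → Option XG)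
    (δA : XA → Ev S → Option XA) (x0G : XG) (x0A : XA) (Xcrit : Set XG) :
    Set (List (Set S ⊕ Ev S)) :=
  {s | s ∈ LA So Suc Sa δG δA x0G x0A ∧
    ∀ u, u <+: s → ∀ st, run (δAr So Suc Sa δG δA) (Sum.inl (arenaInit x0G x0A)) u =
      some st → I1 st ∩ Xcrit = ∅}

/-- The controllable meta-events `E_c = Γ \ {Σ_uc}`. -/
def Ec (Suc : Set S) : Set (Set S ⊕ Ev S) :=
  {a | ∃ γ : Set S, a = Sum.inl γ ∧ Suc ⊆ γ ∧ γ ≠ Suc}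

/-- `K` is controllable w.r.t. `L` and the uncontrollable events `Euc`. -/
def ControllableLang {E : Type} (L : Set (List E)) (Euc : Set E)
    (K : Set (List E)) : Prop :=
  ∀ s ∈ K, ∀ a ∈ Euc, s ++ [a] ∈ L → s ++ [a] ∈ K

/-- `K` is normal w.r.t. the projection `P` and `L`: `K = P⁻¹(P(K)) ∩ L`. -/
def NormalLang {E : Type} (P : List E → List E) (L K : Set (List E)) : Prop :=
  K = {s | s ∈ L ∧ ∃ t ∈ K, P t = P s}

/-- Natural projection of meta-strings onto the observable meta-events
`E_o = E \ Σ_a^e`. -/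
def projEo : List (Set S ⊕ Ev S) → List (Set S ⊕ Ev S) := fun s =>
  s.flatMap fun a =>
    match a with
    | Sum.inr (.ins _) => []
    | Sum.inr (.del _) => []
    | a => [a]

/-- `L(𝒜^{sup})`: the union of all sublanguages of `L(𝒜^{trim})` that are
controllable w.r.t. `L(𝒜)` and `E \ E_c` and normal w.r.t. `E_o` and `L(𝒜)`. -/
def Lsup (So Suc Sa : Set S) (δG : XG → S → Option XG)
    (δA : XA → Ev S → Option XA) (x0G : XG) (x0A : XA) (Xcrit : Set XG) :
    Set (List (Set S ⊕ Ev S)) :=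
  ⋃₀ {K | K ⊆ LAtrim So Suc Sa δG δA x0G x0A Xcrit ∧
      ControllableLang (LA So Suc Sa δG δA x0G x0A) (Ec Suc)ᶜ K ∧
      NormalLang projEo (LA So Suc Sa δG δA x0G x0A) K}

/-- The run word `W(s; γ₀, …, γ_{|s|})` in the arena. -/
def Wword (γ0 : Set S) (s : List (Ev S)) (γs : List (Set S)) :
    List (Set S ⊕ Ev S) :=
  Sum.inl γ0 :: (s.zip γs).flatMap fun p =>
    match p.1 with
    | .plain a => [Sum.inr (Ev.plain a), Sum.inl p.2]
    | .del a => [Sum.inr (Ev.del a)]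
    | .ins a => [Sum.inr (Ev.ins a), Sum.inr (Ev.plain a), Sum.inl p.2]

/-- The projection `η : E* → Σ_o*` erasing all meta-events not in `Σ_o`. -/
def ηproj (So : Set S) : List (Set S ⊕ Ev S) → List S := fun s =>
  s.flatMap fun a =>
    match a with
    | Sum.inr (.plain e) => if e ∈ So then [e] else []
    | _ => []


/-- The all-out attack strategy: a single state with every event of `Σ_{o,e}`
defined (as a self-loop). -/
def allOutδ (So Sa : Set S) : Unit → Ev S → Option Unit := fun _ e =>
  if inOe So Sa e then some () else none

/-- The supervisor extracted from a generator of `L(𝒜^{sup})` by a choice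
function `c` of control decisions (Algorithm 1): on an observable enabled event
follow the arena (choose `c y`, then the event), on an unobservable enabled
event self-loop, and disable events outside `c y`. -/
def extractR {Y : Type} (So : Set S) (δg : Y → (Set S ⊕ Ev S) → Option Y)
    (c : Y → Set S) : Y → S → Option Y := fun y a =>
  if a ∈ c y then
    if a ∈ So then
      some (((δg y (Sum.inl (c y))).bind fun y' =>
        δg y' (Sum.inr (Ev.plain a))).getD y)
    else some y
  else none

/-- The language `L_R` built inductively from a supervisor `R` inside the arena:
`ε ∈ L_R`; from a player-2 state every event of `Σ_{o,e}` feasible in `𝒜` may be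
appended; from a player-1 state the control decisions `Σ_uc` and `C_R(η(s))`
may be appended. -/
inductive LRmem {S XG XA XR : Type} (So Suc Sa : Set S)
    (δG : XG → S → Option XG) (x0G : XG)
    (δA : XA → Ev S → Option XA) (x0A : XA)
    (δR : XR → S → Option XR) (x0R : XR) : List (Set S ⊕ Ev S) → Prop
  | nil : LRmem So Suc Sa δG x0G δA x0A δR x0R []
  | p2 (s : List (Set S ⊕ Ev S)) (q : AQ2 S XG XA) (e : Ev S) :
      LRmem So Suc Sa δG x0G δA x0A δR x0R s →
      run (δAr So Suc Sa δG δA) (Sum.inl (arenaInit x0G x0A)) s = some (Sum.inr q) →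
      inOe So Sa e →
      (run (δAr So Suc Sa δG δA) (Sum.inl (arenaInit x0G x0A))
        (s ++ [Sum.inr e])).isSome →
      LRmem So Suc Sa δG x0G δA x0A δR x0R (s ++ [Sum.inr e])
  | p1uc (s : List (Set S ⊕ Ev S)) (p : AQ1 XG XA) :
      LRmem So Suc Sa δG x0G δA x0A δR x0R s →
      run (δAr So Suc Sa δG δA) (Sum.inl (arenaInit x0G x0A)) s = some (Sum.inl p) →
      LRmem So Suc Sa δG x0G δA x0A δR x0R (s ++ [Sum.inl Suc])
  | p1R (s : List (Set S ⊕ Ev S)) (p : AQ1 XG XA) :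
      LRmem So Suc Sa δG x0G δA x0A δR x0R s →
      run (δAr So Suc Sa δG δA) (Sum.inl (arenaInit x0G x0A)) s = some (Sum.inl p) →
      LRmem So Suc Sa δG x0G δA x0A δR x0R (s ++ [Sum.inl (CR δR x0R (ηproj So s))])

/-! Along every string `s` of `L_R` the arena's state estimate is sound for the closed loop: each
plant state in it is reached by a run of `G_a ‖ R_a ‖ A` in which `R` sits in `Δ_R(η(s))`. This
is preserved because the control decisions `Σ_uc` and `C_R(η(s))` of `L_R` are enabled by `R` in
that state, and because `R` self-loops on the unobservable events the arena lets the plant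
execute. Robustness says that no such plant state is critical, and `L_R` is prefix-closed. -/

theorem run_append {X E : Type} (δ : X → E → Option X) (x : X) (u v : List E) :
    run δ x (u ++ v) = (run δ x u).bind fun y => run δ y v := by
  induction u generalizing x with
  | nil => rfl
  | cons e u ih => simp only [List.cons_append, run, ih, Option.bind_assoc]

theorem run_concat {X E : Type} (δ : X → E → Option X) (x : X) (u : List E) (e : E) :
    run δ x (u ++ [e]) = (run δ x u).bind fun y => δ y e := by
  simp [run_append, run]

theorem ΔRrun_append (δR : XR → S → Option XR) (y : XR) (u v : List S) :
    ΔRrun δR y (u ++ v) = ΔRrun δR (ΔRrun δR y u) v := by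
  induction u generalizing y with
  | nil => rfl
  | cons e u ih => exact ih _

def Reachable {X E : Type} (δ : X → E → Option X) (x₀ x : X) : Prop :=
  ∃ t, run δ x₀ t = some x

section Reachable

variable {X E : Type} {δ : X → E → Option X} {x₀ x x' : X}

theorem Reachable.refl : Reachable δ x₀ x₀ := ⟨[], rfl⟩

theorem Reachable.tail_run {t : List E} (hx : Reachable δ x₀ x) (ht : run δ x t = some x') :
    Reachable δ x₀ x' := by
  obtain ⟨s, hs⟩ := hx
  exact ⟨s ++ t, by rw [run_append, hs, Option.bind_some, ht]⟩

theorem Reachable.tail {e : E} (hx : Reachable δ x₀ x) (he : δ x e = some x') :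
    Reachable δ x₀ x' :=
  hx.tail_run (t := [e]) (by simp [run, he])

end Reachable

section ClosedLoop

variable {So Sa : Set S} {δG : XG → S → Option XG} {δR : XR → S → Option XR}
  {δA : XA → Ev S → Option XA}

theorem PGproj_append (u v : List (Ev S)) : PGproj (u ++ v) = PGproj u ++ PGproj v :=
  List.flatMap_append

theorem run_PGproj_singleton_of_δGa {x x' : XG} {e : Ev S} (h : δGa Sa δG x e = some x') :
    run δG x (PGproj [e]) = some x' := by
  cases e <;> simp only [δGa] at h <;> (try split_ifs at h) <;> simp_all [PGproj, run]

theorem run_PGproj_of_run_δGa {x x' : XG} {t : List (Ev S)}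
    (h : run (δGa Sa δG) x t = some x') : run δG x (PGproj t) = some x' := by
  induction t generalizing x with
  | nil => exact h
  | cons e t ih =>
    obtain ⟨y, hy, ht⟩ := Option.bind_eq_some_iff.mp h
    rw [show e :: t = [e] ++ t from rfl, PGproj_append, run_append,
      run_PGproj_singleton_of_δGa hy, Option.bind_some, ih ht]

theorem δGa_fst_of_δGRA {p p' : XG × XR × XA} {e : Ev S}
    (h : δGRA So Sa δG δR δA p e = some p') : δGa Sa δG p.1 e = some p'.1 := by
  obtain ⟨x', y', z'⟩ := p'
  unfold δGRA at h
  repeat' split at h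
  all_goals simp_all

theorem run_δGa_of_run_δGRA {p p' : XG × XR × XA} {t : List (Ev S)}
    (h : run (δGRA So Sa δG δR δA) p t = some p') : run (δGa Sa δG) p.1 t = some p'.1 := by
  induction t generalizing p with
  | nil => cases h; rfl
  | cons e t ih =>
    obtain ⟨q, hq, ht⟩ := Option.bind_eq_some_iff.mp h
    simp only [run, δGa_fst_of_δGRA hq, Option.bind_some, ih ht]

theorem Robust.not_mem_of_reachable {Xcrit : Set XG} {x0G : XG} {x0R : XR} {x0A : XA}
    (hRob : Robust So Sa Xcrit δG x0G δR x0R δA x0A) {x : XG} {y : XR} {z : XA}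
    (h : Reachable (δGRA So Sa δG δR δA) (x0G, x0R, x0A) (x, y, z)) : x ∉ Xcrit := by
  obtain ⟨t, ht⟩ := h
  exact hRob t (by simp [Lang, ht]) x (run_PGproj_of_run_δGa (run_δGa_of_run_δGRA ht))

variable {x x' : XG} {y y' : XR} {z z' : XA} {a : S}

theorem δGRA_plain_of_mem (ha : a ∈ So) (hG : δG x a = some x') (hR : δR y a = some y')
    (hA : δA z (.plain a) = some z') :
    δGRA So Sa δG δR δA (x, y, z) (.plain a) = some (x', y', z') := by
  simp [δGRA, δGa, δRa, ha, hG, hR, hA]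

theorem δGRA_plain_of_not_mem (ha : a ∉ So) (hG : δG x a = some x') (hR : δR y a = some y') :
    δGRA So Sa δG δR δA (x, y, z) (.plain a) = some (x', y', z) := by
  simp [δGRA, δGa, δRa, ha, hG, hR]

theorem δGRA_ins (ha : a ∈ Sa) (hA : δA z (.ins a) = some z') :
    δGRA So Sa δG δR δA (x, y, z) (.ins a) = some (x, ΔRrun δR y [a], z') := by
  cases hR : δR y a <;> simp [δGRA, δGa, δRa, ΔRrun, ha, hA, hR]

theorem δGRA_del (ha : a ∈ Sa) (hG : δG x a = some x') (hR : a ∈ ΓR δR y)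
    (hA : δA z (.del a) = some z') :
    δGRA So Sa δG δR δA (x, y, z) (.del a) = some (x', y, z') := by
  obtain ⟨y', hy'⟩ := Option.isSome_iff_exists.mp hR
  simp [δGRA, δGa, δRa, ha, hG, hA, hy']

end ClosedLoop

section Estimate

variable {So Suc Sa : Set S} {δG : XG → S → Option XG} {δR : XR → S → Option XR}
  {δA : XA → Ev S → Option XA}

theorem IsSupRealization.uc_subset_CR (hR : IsSupRealization So Suc δR) (x0R : XR)
    (w : List S) : Suc ⊆ CR δR x0R w :=
  fun a ha => hR.1 _ a ha

theorem Reachable.of_run_unobs (hR : IsSupRealization So Suc δR) {p₀ : XG × XR × XA}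
    {q x : XG} {y : XR} {z : XA} {t : List S} (ht : ∀ a ∈ t, a ∉ So ∧ a ∈ ΓR δR y)
    (hq : Reachable (δGRA So Sa δG δR δA) p₀ (q, y, z)) (hrun : run δG q t = some x) :
    Reachable (δGRA So Sa δG δR δA) p₀ (x, y, z) := by
  induction t generalizing q with
  | nil => cases hrun; exact hq
  | cons a t ih =>
    obtain ⟨q', hq', hrun⟩ := Option.bind_eq_some_iff.mp hrun
    obtain ⟨haSo, haR⟩ := ht a List.mem_cons_self
    exact ih (fun b hb => ht b (List.mem_cons_of_mem a hb))
      (hq.tail (δGRA_plain_of_not_mem haSo hq' (hR.2 y a haSo haR))) hrun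

theorem Reachable.of_mem_URch (hR : IsSupRealization So Suc δR) {p₀ : XG × XR × XA}
    {Q : Set XG} {γ : Set S} {x : XG} {y : XR} {z : XA} (hγ : γ ⊆ ΓR δR y)
    (hQ : ∀ q ∈ Q, Reachable (δGRA So Sa δG δR δA) p₀ (q, y, z)) (hx : x ∈ URch So δG γ Q) :
    Reachable (δGRA So Sa δG δR δA) p₀ (x, y, z) := by
  obtain ⟨t, ht, q, hq, hrun⟩ := hx
  exact .of_run_unobs hR (fun a ha => ⟨(ht a ha).1, hγ (ht a ha).2⟩) (hQ q hq) hrun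

/-- The `σ.toList` accounts for an inserted event `a_i`: `R_a` has already moved on `a`, while
the arena still awaits the echo `a` that makes it observable. -/
def EstimateInv (So Sa : Set S) (δG : XG → S → Option XG) (x0G : XG)
    (δR : XR → S → Option XR) (x0R : XR) (δA : XA → Ev S → Option XA) (x0A : XA)
    (s : List (Set S ⊕ Ev S)) : AQ1 XG XA ⊕ AQ2 S XG XA → Prop
  | .inl (Q, z) => ∀ x ∈ Q,
      Reachable (δGRA So Sa δG δR δA) (x0G, x0R, x0A) (x, ΔRrun δR x0R (ηproj So s), z)
  | .inr (Q, z, γ, σ) => γ ⊆ CR δR x0R (ηproj So s) ∧ ∀ x ∈ Q,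
      Reachable (δGRA So Sa δG δR δA) (x0G, x0R, x0A)
        (x, ΔRrun δR x0R (ηproj So s ++ σ.toList), z)

variable {x0G : XG} {x0R : XR} {x0A : XA} {s : List (Set S ⊕ Ev S)}

theorem EstimateInv.player1_move (hR : IsSupRealization So Suc δR) {p : AQ1 XG XA} {γ : Set S}
    (hinv : EstimateInv So Sa δG x0G δR x0R δA x0A s (.inl p))
    (hγ : γ ⊆ CR δR x0R (ηproj So s)) :
    EstimateInv So Sa δG x0G δR x0R δA x0A (s ++ [.inl γ]) (.inr (h1 So δG p γ)) := by
  have hη : ηproj So (s ++ [.inl γ]) = ηproj So s := by simp [ηproj]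
  refine ⟨hη ▸ hγ, fun x hx => ?_⟩
  rw [hη, Option.toList_none, List.append_nil]
  exact .of_mem_URch hR hγ hinv hx

theorem EstimateInv.player2_plain {q : AQ2 S XG XA} {a : S} {st : AQ1 XG XA ⊕ AQ2 S XG XA}
    (hinv : EstimateInv So Sa δG x0G δR x0R δA x0A s (.inr q))
    (h : h2 So Sa δG δA q (.plain a) = some st) :
    EstimateInv So Sa δG x0G δR x0R δA x0A (s ++ [.inr (.plain a)]) st := by
  obtain ⟨Q, z, γ, σ⟩ := q
  obtain ⟨hγ, hQ⟩ := hinv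
  simp only [h2] at h
  split_ifs at h with ha hσ hcond
  all_goals
    have hη : ηproj So (s ++ [.inr (.plain a)]) = ηproj So s ++ [a] := by simp [ηproj, ha]
  · cases h
    subst hσ
    exact fun x hx => hη ▸ hQ x hx
  · obtain ⟨rfl, -, haγ⟩ := hcond
    rw [Option.toList_none, List.append_nil] at hQ
    obtain ⟨z', hz', rfl⟩ := Option.map_eq_some_iff.mp h
    rintro x' ⟨x, hx, hxa⟩
    obtain ⟨y', hy'⟩ := Option.isSome_iff_exists.mp (hγ haγ)
    have := (hQ x hx).tail (δGRA_plain_of_mem ha hxa hy' hz')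
    simpa [hη, ΔRrun_append, ΔRrun, hy'] using this

theorem EstimateInv.player2_ins {q : AQ2 S XG XA} {a : S} {st : AQ1 XG XA ⊕ AQ2 S XG XA}
    (hinv : EstimateInv So Sa δG x0G δR x0R δA x0A s (.inr q))
    (h : h2 So Sa δG δA q (.ins a) = some st) :
    EstimateInv So Sa δG x0G δR x0R δA x0A (s ++ [.inr (.ins a)]) st := by
  obtain ⟨Q, z, γ, σ⟩ := q
  obtain ⟨hγ, hQ⟩ := hinv
  simp only [h2] at h
  split_ifs at h with hcond
  obtain ⟨ha, rfl⟩ := hcond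
  obtain ⟨z', hz', rfl⟩ := Option.map_eq_some_iff.mp h
  have hη : ηproj So (s ++ [.inr (.ins a)]) = ηproj So s := by simp [ηproj]
  refine ⟨hη ▸ hγ, fun x hx => ?_⟩
  have := (hQ x hx).tail (δGRA_ins (So := So) (δG := δG) ha hz')
  simpa [hη, ΔRrun_append] using this

theorem EstimateInv.player2_del (hR : IsSupRealization So Suc δR) {q : AQ2 S XG XA} {a : S}
    {st : AQ1 XG XA ⊕ AQ2 S XG XA}
    (hinv : EstimateInv So Sa δG x0G δR x0R δA x0A s (.inr q))
    (h : h2 So Sa δG δA q (.del a) = some st) :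
    EstimateInv So Sa δG x0G δR x0R δA x0A (s ++ [.inr (.del a)]) st := by
  obtain ⟨Q, z, γ, σ⟩ := q
  obtain ⟨hγ, hQ⟩ := hinv
  simp only [h2] at h
  split_ifs at h with hcond
  obtain ⟨ha, rfl, -, haγ⟩ := hcond
  rw [Option.toList_none, List.append_nil] at hQ
  obtain ⟨z', hz', rfl⟩ := Option.map_eq_some_iff.mp h
  have hη : ηproj So (s ++ [.inr (.del a)]) = ηproj So s := by simp [ηproj]
  refine ⟨hη ▸ hγ, fun x hx => ?_⟩
  rw [hη, Option.toList_none, List.append_nil]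
  refine .of_mem_URch hR hγ (fun x' hx' => ?_) hx
  obtain ⟨x, hx, hxa⟩ := hx'
  exact (hQ x hx).tail (δGRA_del ha hxa (hγ haγ) hz')

theorem EstimateInv.player2_move (hR : IsSupRealization So Suc δR) {q : AQ2 S XG XA} {e : Ev S}
    {st : AQ1 XG XA ⊕ AQ2 S XG XA}
    (hinv : EstimateInv So Sa δG x0G δR x0R δA x0A s (.inr q))
    (h : h2 So Sa δG δA q e = some st) :
    EstimateInv So Sa δG x0G δR x0R δA x0A (s ++ [.inr e]) st := by
  cases e
  exacts [hinv.player2_plain h, hinv.player2_ins h, hinv.player2_del hR h]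

theorem EstimateInv.exists_reachable {st : AQ1 XG XA ⊕ AQ2 S XG XA}
    (hinv : EstimateInv So Sa δG x0G δR x0R δA x0A s st) {x : XG} (hx : x ∈ I1 st) :
    ∃ y z, Reachable (δGRA So Sa δG δR δA) (x0G, x0R, x0A) (x, y, z) := by
  rcases st with ⟨Q, z⟩ | ⟨Q, z, γ, σ⟩
  exacts [⟨_, _, hinv x hx⟩, ⟨_, _, hinv.2 x hx⟩]

theorem LRmem.exists_run_estimateInv (hR : IsSupRealization So Suc δR)
    (hs : LRmem So Suc Sa δG x0G δA x0A δR x0R s) :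
    ∃ st, run (δAr So Suc Sa δG δA) (.inl (arenaInit x0G x0A)) s = some st ∧
      EstimateInv So Sa δG x0G δR x0R δA x0A s st := by
  induction hs with
  | nil => exact ⟨_, rfl, fun x hx => hx ▸ Reachable.refl⟩
  | p2 _ _ _ _ hrun _ hdef ih =>
    obtain ⟨st, hst, hinv⟩ := ih
    cases hrun.symm.trans hst
    rw [run_concat, hrun] at hdef ⊢
    obtain ⟨st', hst'⟩ := Option.isSome_iff_exists.mp hdef
    exact ⟨st', hst', hinv.player2_move hR hst'⟩
  | p1uc _ _ _ hrun ih =>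
    obtain ⟨st, hst, hinv⟩ := ih
    cases hrun.symm.trans hst
    exact ⟨_, by simp [run_concat, hrun, δAr], hinv.player1_move hR (hR.uc_subset_CR _ _)⟩
  | p1R s _ _ hrun ih =>
    obtain ⟨st, hst, hinv⟩ := ih
    cases hrun.symm.trans hst
    have hsub := hR.uc_subset_CR x0R (ηproj So s)
    exact ⟨_, by simp [run_concat, hrun, δAr, hsub], hinv.player1_move hR subset_rfl⟩

theorem LRmem.of_prefix (hs : LRmem So Suc Sa δG x0G δA x0A δR x0R s)
    {u : List (Set S ⊕ Ev S)} (hu : u <+: s) : LRmem So Suc Sa δG x0G δA x0A δR x0R u := by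
  induction hs with
  | nil => exact List.prefix_nil.mp hu ▸ .nil
  | p2 _ _ _ h₁ h₂ h₃ h₄ ih =>
    rcases List.prefix_concat_iff.mp hu with rfl | hu
    exacts [.p2 _ _ _ h₁ h₂ h₃ h₄, ih hu]
  | p1uc _ _ h₁ h₂ ih =>
    rcases List.prefix_concat_iff.mp hu with rfl | hu
    exacts [.p1uc _ _ h₁ h₂, ih hu]
  | p1R _ _ h₁ h₂ ih =>
    rcases List.prefix_concat_iff.mp hu with rfl | hu
    exacts [.p1R _ _ h₁ h₂, ih hu]

end Estimate

theorem LR_subset_LAtrim_general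
    (So Suc Sa : Set S) (Xcrit : Set XG)
    (δG : XG → S → Option XG) (x0G : XG)
    (δR : XR → S → Option XR) (x0R : XR) (hR : IsSupRealization So Suc δR)
    (δA : XA → Ev S → Option XA) (x0A : XA)
    (hRob : Robust So Sa Xcrit δG x0G δR x0R δA x0A) :
    {s | LRmem So Suc Sa δG x0G δA x0A δR x0R s} ⊆
      LAtrim So Suc Sa δG δA x0G x0A Xcrit := by
  intro s hs
  obtain ⟨st, hst, -⟩ := hs.exists_run_estimateInv hR
  refine ⟨by simp [LA, Lang, hst], fun u hu st hst => ?_⟩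
  obtain ⟨st', hst', hinv⟩ := (hs.of_prefix hu).exists_run_estimateInv hR
  cases hst.symm.trans hst'
  refine Set.eq_empty_of_forall_notMem fun x ⟨hx, hcrit⟩ => ?_
  obtain ⟨y, z, hreach⟩ := hinv.exists_reachable hx
  exact hRob.not_mem_of_reachable hreach hcrit

/-- if `R` is robust w.r.t. `G`, `X_crit` and `A`, then
`L_R ⊆ L(𝒜^{trim})`, i.e., no string of `L_R` reaches a state `q` of `𝒜` with
`I₁(q) ∩ X_crit ≠ ∅`. -/
theorem LR_subset_LAtrim
    [Finite S] [Finite XG] [Finite XR] [Finite XA]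
    (So Suc Sa : Set S) (hSa : Sa ⊆ So) (Xcrit : Set XG)
    (δG : XG → S → Option XG) (x0G : XG)
    (δR : XR → S → Option XR) (x0R : XR) (hR : IsSupRealization So Suc δR)
    (δA : XA → Ev S → Option XA) (x0A : XA) (hA : IsAttack So Sa δA)
    (hRob : Robust So Sa Xcrit δG x0G δR x0R δA x0A) :
    {s | LRmem So Suc Sa δG x0G δA x0A δR x0R s} ⊆
      LAtrim So Suc Sa δG δA x0G x0A Xcrit :=
  LR_subset_LAtrim_general So Suc Sa Xcrit δG x0G δR x0R hR δA x0A hRob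

end RobustDES
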